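/- If d^0, d^1 : Z^0 → Z^1 are the two coface maps of a cosimplicial pointed space Z and s^0 : Z^1 → Z^0 is the codegeneracy, then the homotopy fibers of d^0 and of d^1 are both weakly equivalent to Ω hofib(s^0); in particular hofib(d^0) ≃ hofib(d^1). -/

import Mathlib

/-!
STATEMENT 3: If d^0, d^1 : Z^0 → Z^1 are the two coface maps of a cosimplicial
pointed space Z and s^0 : Z^1 → Z^0 is the codegeneracy, then the homotopy
fibers of d^0 and of d^1 are both weakly equivalent to Ω hofib(s^0);
in particular hofib(d^0) ≃ hofib(d^1).
-/

noncomputable section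

open scoped Topology unitInterval

/-- The map induced by a continuous map on `n`-th homotopy groups. -/
def piMap (n : ℕ) {X Y : Type*} [TopologicalSpace X] [TopologicalSpace Y]
    (f : C(X, Y)) (x : X) : HomotopyGroup.Pi n X x → HomotopyGroup.Pi n Y (f x) :=
  Quotient.map' (fun g => ⟨f.comp g.1, fun y hy => by
      simp [ContinuousMap.comp_apply, g.2 y hy]⟩)
    (fun g h H => H.map fun F => F.compContinuousMap f)

/-- `(X, x)` is weakly equivalent to `(Y, y)`: there is a pointed map inducing
bijections on all homotopy groups. -/
def WeaklyEquivalentTo (X : Type*) [TopologicalSpace X] (x : X)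
    (Y : Type*) [TopologicalSpace Y] (y : Y) : Prop :=
  ∃ f : C(X, Y), f x = y ∧ ∀ n : ℕ, Function.Bijective (piMap n f x)

/-- The homotopy fiber of `f` over `y0`: pairs of a point `x` and a path from
`f x` to `y0`. -/
def HoFib {X Y : Type*} [TopologicalSpace X] [TopologicalSpace Y]
    (f : C(X, Y)) (y0 : Y) : Type _ :=
  {p : X × C(I, Y) // p.2 0 = f p.1 ∧ p.2 1 = y0}

instance {X Y : Type*} [TopologicalSpace X] [TopologicalSpace Y]
    (f : C(X, Y)) (y0 : Y) : TopologicalSpace (HoFib f y0) :=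
  instTopologicalSpaceSubtype

/-- The canonical basepoint of the homotopy fiber of a pointed map. -/
def HoFib.pt {X Y : Type*} [TopologicalSpace X] [TopologicalSpace Y]
    (f : C(X, Y)) {x0 : X} {y0 : Y} (hf : f x0 = y0) : HoFib f y0 :=
  ⟨(x0, ContinuousMap.const I y0), by simp [hf]⟩

/-!
Write `f` for a coface map and `r` for `s⁰`, so that `r ∘ f = id`. A point of `hofib f` is a
point `x` with a path `p` from `f x` to `y₀`; it gives a loop in `hofib r` whose `Y`-coordinate
runs back along `f ∘ r ∘ p` and then along `p`, with the tails of `r ∘ p` as `X`-coordinates.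
Conversely a loop in `hofib r` gives `x₀` together with the loop's `Y`-coordinate. These maps are
inverse pointed homotopy equivalences. On `hofib f` the homotopy slides `x` along `r ∘ p` to `x₀`.
A loop in `hofib r` is a square in `X` that is `x₀` on three edges and `r` of the loop's
`Y`-coordinate on the fourth; once the loop is made constant on its first half, turning the
direction in which its paths cross the square from vertical to horizontal deforms it into the
image of its `Y`-coordinate.
-/

def clamp (t : ℝ) : I := Set.projIcc 0 1 zero_le_one t

@[fun_prop] lemma continuous_clamp : Continuous clamp := continuous_projIcc (h := zero_le_one)

@[simp] lemma clamp_coe (t : I) : clamp t = t := Set.projIcc_val zero_le_one t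

lemma clamp_of_nonpos {t : ℝ} (h : t ≤ 0) : clamp t = 0 := Set.projIcc_of_le_left _ h

lemma clamp_of_one_le {t : ℝ} (h : 1 ≤ t) : clamp t = 1 := Set.projIcc_of_right_le _ h

@[simp] lemma clamp_zero : clamp 0 = 0 := clamp_of_nonpos le_rfl

@[simp] lemma clamp_one : clamp 1 = 1 := clamp_of_one_le le_rfl

section HomotopyGroups

variable {X Y Z : Type*} [TopologicalSpace X] [TopologicalSpace Y] [TopologicalSpace Z]

lemma piMap_comp (n : ℕ) (f : C(X, Y)) (g : C(Y, Z)) (x : X) (a : HomotopyGroup.Pi n X x) :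
    piMap n (g.comp f) x a = piMap n g (f x) (piMap n f x a) := by
  induction a using Quotient.inductionOn
  rfl

def piCast (n : ℕ) {x y : X} (h : x = y) : HomotopyGroup.Pi n X x → HomotopyGroup.Pi n X y :=
  Quotient.map' (fun γ => ⟨γ.1, fun v hv => (γ.2 v hv).trans h⟩) (fun _ _ hh => hh)

lemma piCast_bijective (n : ℕ) {x y : X} (h : x = y) : Function.Bijective (piCast n h) := by
  subst h
  convert Function.bijective_id
  ext a
  induction a using Quotient.inductionOn
  rfl

lemma piMap_eq_piCast_of_homotopicRel_id {n : ℕ} {F : C(X, X)} {x : X}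
    (h : F.HomotopicRel (.id X) {x}) (a : HomotopyGroup.Pi n X x) :
    piMap n F x a = piCast n (h.some.fst_eq_snd rfl).symm a := by
  obtain ⟨H⟩ := h
  induction a using Quotient.inductionOn with
  | _ δ =>
    refine Quotient.sound ⟨⟨H.toHomotopy.compContinuousMap δ.1, fun t v hv => ?_⟩⟩
    change H (t, δ v) = F (δ v)
    rw [GenLoop.boundary δ v hv]
    exact H.eq_fst t rfl

lemma bijective_piMap_of_homotopicRel_id {F : C(X, X)} {x : X}
    (h : F.HomotopicRel (.id X) {x}) (n : ℕ) : Function.Bijective (piMap n F x) := by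
  rw [funext (piMap_eq_piCast_of_homotopicRel_id h)]
  exact piCast_bijective n _

lemma bijective_piMap_of_homotopicRel {φ : C(X, Y)} {ψ : C(Y, X)} {x : X} {y : Y}
    (hφ : φ x = y) (hψφ : (ψ.comp φ).HomotopicRel (.id X) {x})
    (hφψ : (φ.comp ψ).HomotopicRel (.id Y) {y}) (n : ℕ) :
    Function.Bijective (piMap n φ x) := by
  subst hφ
  have hψ : ψ (φ x) = x := hψφ.some.fst_eq_snd rfl
  refine ⟨fun a b hab => (bijective_piMap_of_homotopicRel_id hψφ n).1 ?_, ?_⟩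
  · rw [piMap_comp, piMap_comp, hab]
  · have hsurj := (bijective_piMap_of_homotopicRel_id hφψ n).2
    rw [funext (piMap_comp n ψ φ (φ x))] at hsurj
    exact hψ ▸ hsurj.of_comp

lemma WeaklyEquivalentTo.of_homotopicRel {x : X} {y : Y} (φ : C(X, Y)) (ψ : C(Y, X))
    (hφ : φ x = y) (hψφ : (ψ.comp φ).HomotopicRel (.id X) {x})
    (hφψ : (φ.comp ψ).HomotopicRel (.id Y) {y}) : WeaklyEquivalentTo X x Y y :=
  ⟨φ, hφ, bijective_piMap_of_homotopicRel hφ hψφ hφψ⟩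

lemma WeaklyEquivalentTo.nonempty_equiv {Z : Type*} [TopologicalSpace Z] {x : X} {y : Y} {z : Z}
    (hX : WeaklyEquivalentTo X x Z z) (hY : WeaklyEquivalentTo Y y Z z) (n : ℕ) :
    Nonempty (HomotopyGroup.Pi n X x ≃ HomotopyGroup.Pi n Y y) := by
  obtain ⟨φ, rfl, hφ⟩ := hX
  obtain ⟨χ, hχ, hχn⟩ := hY
  exact ⟨(Equiv.ofBijective _ (hφ n)).trans
    ((Equiv.cast (by rw [hχ])).trans (Equiv.ofBijective _ (hχn n)).symm)⟩

end HomotopyGroups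

section Paths

variable {A W : Type*} [TopologicalSpace A] [TopologicalSpace W]

lemma ContinuousMap.homotopicRel_singleton {F G : C(A, W)} {a : A} (H : C(I × A, W))
    (h₀ : ∀ x, H (0, x) = F x) (h₁ : ∀ x, H (1, x) = G x) (ha : ∀ t, H (t, a) = F a) :
    F.HomotopicRel G {a} :=
  ⟨{ toContinuousMap := H, map_zero_left := h₀, map_one_left := h₁,
     prop' := by rintro t x rfl; exact ha t }⟩

def ContinuousMap.curryPath {w₀ w₁ : W} (c : C(A × I, W)) (h₀ : ∀ a, c (a, 0) = w₀)
    (h₁ : ∀ a, c (a, 1) = w₁) : C(A, Path w₀ w₁) :=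
  ⟨fun a => ⟨c.curry a, h₀ a, h₁ a⟩, Path.continuous_uncurry_iff.1 c.continuous⟩

@[simp] lemma ContinuousMap.curryPath_apply {w₀ w₁ : W} (c : C(A × I, W))
    (h₀ : ∀ a, c (a, 0) = w₀) (h₁ : ∀ a, c (a, 1) = w₁) (a : A) (t : I) :
    c.curryPath h₀ h₁ a t = c (a, t) := rfl

variable {w₀ w₁ : W}

def Path.reparamCM (c : C(I, I)) (hc₀ : c 0 = 0) (hc₁ : c 1 = 1) :
    C(Path w₀ w₁, Path w₀ w₁) :=
  ContinuousMap.curryPath ⟨fun p : Path w₀ w₁ × I => p.1 (c p.2), by fun_prop⟩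
    (fun γ => by simp [hc₀]) (fun γ => by simp [hc₁])

lemma Path.reparamCM_homotopicRel_id (c : C(I, I)) (hc₀ : c 0 = 0) (hc₁ : c 1 = 1) :
    (Path.reparamCM c hc₀ hc₁).HomotopicRel (.id _) {Path.refl w₀} := by
  refine ContinuousMap.homotopicRel_singleton
    (ContinuousMap.curryPath
      ⟨fun p : (I × Path w₀ w₀) × I => p.1.2.extend ((1 - p.1.1) * c p.2 + p.1.1 * p.2),
        by fun_prop⟩ (fun p => ?_) (fun p => ?_)) (fun γ => ?_) (fun γ => ?_) (fun u => ?_)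
  · simp [hc₀]
  · simp [hc₁]
  · ext t; simp [Path.reparamCM]
  · ext t; simp
  · ext t; simp [Path.reparamCM]

end Paths

def stretchSecondHalf : C(I, I) := ⟨fun t => clamp (2 * t - 1), by fun_prop⟩

@[simp] lemma stretchSecondHalf_apply (t : I) : stretchSecondHalf t = clamp (2 * t - 1) := rfl

lemma stretchSecondHalf_zero : stretchSecondHalf 0 = 0 := clamp_of_nonpos (by norm_num)

lemma stretchSecondHalf_one : stretchSecondHalf 1 = 1 := by norm_num

lemma one_le_or_one_le_of_corner {u a l : ℝ} (ha : 0 ≤ a) (hl : 1 ≤ l) :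
    1 ≤ a + l * min 1 (2 * u) ∨ 1 ≤ l * min 1 (2 - 2 * u) := by
  rcases le_total u (1 / 2) with h | h
  · right; rw [min_eq_left (by linarith)]; linarith
  · left; rw [min_eq_left (by linarith)]; linarith

namespace HoFib

section Basic

variable {A X Y : Type*} [TopologicalSpace A] [TopologicalSpace X] [TopologicalSpace Y]
  {f : C(X, Y)} {y₀ : Y}

def point (w : HoFib f y₀) : X := w.1.1

def path (w : HoFib f y₀) : C(I, Y) := w.1.2

@[simp] lemma path_zero (w : HoFib f y₀) : w.path 0 = f w.point := w.2.1

@[simp] lemma path_one (w : HoFib f y₀) : w.path 1 = y₀ := w.2.2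

@[fun_prop] lemma continuous_point : Continuous (point : HoFib f y₀ → X) :=
  continuous_subtype_val.fst

@[fun_prop] lemma continuous_path : Continuous (path : HoFib f y₀ → C(I, Y)) :=
  continuous_subtype_val.snd

@[ext] lemma ext {w w' : HoFib f y₀} (h : w.point = w'.point) (h' : ∀ t, w.path t = w'.path t) :
    w = w' :=
  Subtype.ext (Prod.ext h (ContinuousMap.ext h'))

@[simp] lemma pt_point {x₀ : X} (hf : f x₀ = y₀) : (pt f hf).point = x₀ := rfl

@[simp] lemma pt_path {x₀ : X} (hf : f x₀ = y₀) (t : I) : (pt f hf).path t = y₀ := rfl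

def lift (g : C(A, X)) (p : C(A × I, Y)) (h₀ : ∀ a, p (a, 0) = f (g a))
    (h₁ : ∀ a, p (a, 1) = y₀) : C(A, HoFib f y₀) :=
  ⟨fun a => ⟨(g a, p.curry a), h₀ a, h₁ a⟩, by fun_prop⟩

@[simp] lemma lift_point (g : C(A, X)) (p : C(A × I, Y)) (h₀ : ∀ a, p (a, 0) = f (g a))
    (h₁ : ∀ a, p (a, 1) = y₀) (a : A) : (lift g p h₀ h₁ a).point = g a := rfl

@[simp] lemma lift_path (g : C(A, X)) (p : C(A × I, Y)) (h₀ : ∀ a, p (a, 0) = f (g a))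
    (h₁ : ∀ a, p (a, 1) = y₀) (a : A) (t : I) : (lift g p h₀ h₁ a).path t = p (a, t) := rfl

lemma path_clamp_of_nonpos (w : HoFib f y₀) {a : ℝ} (ha : a ≤ 0) :
    w.path (clamp a) = f w.point := by
  rw [clamp_of_nonpos ha, path_zero]

lemma path_clamp_of_one_le (w : HoFib f y₀) {a : ℝ} (ha : 1 ≤ a) : w.path (clamp a) = y₀ := by
  rw [clamp_of_one_le ha, path_one]

end Basic

section Loops

variable {A X Y : Type*} [TopologicalSpace A] [TopologicalSpace X] [TopologicalSpace Y]
  {r : C(Y, X)} {x₀ : X} {y₀ : Y} {hr : r y₀ = x₀}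

def loopPoint (γ : Path (pt r hr) (pt r hr)) (a : ℝ) : Y := (γ (clamp a)).point

def loopSquare (γ : Path (pt r hr) (pt r hr)) (a b : ℝ) : X := (γ (clamp a)).path (clamp b)

@[fun_prop] lemma _root_.Continuous.hoFibLoopPoint {γ : A → Path (pt r hr) (pt r hr)}
    {a : A → ℝ} (hγ : Continuous γ) (ha : Continuous a) :
    Continuous fun z => loopPoint (γ z) (a z) := by
  unfold loopPoint; fun_prop

@[fun_prop] lemma _root_.Continuous.hoFibLoopSquare {γ : A → Path (pt r hr) (pt r hr)}
    {a b : A → ℝ} (hγ : Continuous γ) (ha : Continuous a) (hb : Continuous b) :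
    Continuous fun z => loopSquare (γ z) (a z) (b z) := by
  unfold loopSquare; fun_prop

/-- For `2t ≥ 1` the path `s ↦ loopSquareSweep γ u t s` crosses the square of `γ` from
`(2t - 1, 0)` in the direction `(min 1 (2u), min 1 (2 - 2u))`, which turns from vertical to
horizontal as `u` runs through `[0, 1]`; for `2t ≤ 1` it starts at `1 - 2t` times that direction.
The direction always has a coordinate equal to `1`, so the path ends on the top or right edge,
where the square is `x₀`. -/
def loopSquareSweep (γ : Path (pt r hr) (pt r hr)) (u t s : ℝ) : X :=
  loopSquare γ (max (2 * t - 1) 0 + (max (1 - 2 * t) 0 + s) * min 1 (2 * u))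
    ((max (1 - 2 * t) 0 + s) * min 1 (2 - 2 * u))

@[fun_prop] lemma _root_.Continuous.hoFibLoopSquareSweep {γ : A → Path (pt r hr) (pt r hr)}
    {u t s : A → ℝ} (hγ : Continuous γ) (hu : Continuous u) (ht : Continuous t)
    (hs : Continuous s) : Continuous fun z => loopSquareSweep (γ z) (u z) (t z) (s z) := by
  unfold loopSquareSweep; fun_prop

variable (γ : Path (pt r hr) (pt r hr)) {a b u t s : ℝ}

@[simp] lemma point_apply_clamp (a : ℝ) : (γ (clamp a)).point = loopPoint γ a := rfl

@[simp] lemma loopSquare_coe_right (a : ℝ) (s : I) :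
    loopSquare γ a s = (γ (clamp a)).path s := by
  simp [loopSquare]

lemma loopPoint_of_nonpos (ha : a ≤ 0) : loopPoint γ a = y₀ := by
  rw [loopPoint, clamp_of_nonpos ha, γ.source, pt_point]

lemma loopPoint_of_one_le (ha : 1 ≤ a) : loopPoint γ a = y₀ := by
  rw [loopPoint, clamp_of_one_le ha, γ.target, pt_point]

lemma loopSquare_of_nonpos_right (hb : b ≤ 0) : loopSquare γ a b = r (loopPoint γ a) := by
  rw [loopSquare, clamp_of_nonpos hb, path_zero]; rfl

lemma loopSquare_of_nonpos (ha : a ≤ 0) : loopSquare γ a b = x₀ := by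
  simp [loopSquare, clamp_of_nonpos ha]

lemma loopSquare_of_one_le (h : 1 ≤ a ∨ 1 ≤ b) : loopSquare γ a b = x₀ := by
  rcases h with h | h
  · simp [loopSquare, clamp_of_one_le h]
  · simp [loopSquare, clamp_of_one_le h, path_one]

@[simp] lemma loopPoint_refl : loopPoint (Path.refl (pt r hr)) a = y₀ := rfl

lemma loopSquareSweep_of_one_le (hs : 1 ≤ s) : loopSquareSweep γ u t s = x₀ :=
  loopSquare_of_one_le γ
    (one_le_or_one_le_of_corner (le_max_right _ _) (by linarith [le_max_right (1 - 2 * t) 0]))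

lemma loopSquareSweep_left (hs : 0 ≤ s) : loopSquareSweep γ u 0 s = x₀ :=
  loopSquare_of_one_le γ (one_le_or_one_le_of_corner (le_max_right _ _) (by norm_num; linarith))

lemma loopSquareSweep_right (hs : 0 ≤ s) (hu : 0 ≤ u) : loopSquareSweep γ u 1 s = x₀ :=
  loopSquare_of_one_le γ (.inl (by norm_num; positivity))

lemma loopSquareSweep_zero (ht : 1 ≤ 2 * t) :
    loopSquareSweep γ u t 0 = r (loopPoint γ (2 * t - 1)) := by
  rw [loopSquareSweep, max_eq_left (by linarith), max_eq_right (by linarith)]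
  simpa using loopSquare_of_nonpos_right γ le_rfl

lemma loopSquareSweep_at_zero : loopSquareSweep γ 0 t s = loopSquare γ (2 * t - 1) s := by
  rcases le_total (2 * t) 1 with ht | ht
  · rw [loopSquareSweep, loopSquare_of_nonpos γ (by simp [ht]),
      loopSquare_of_nonpos γ (by linarith)]
  · simp [loopSquareSweep, ht]

lemma loopSquareSweep_at_one :
    loopSquareSweep γ 1 t s = r (loopPoint γ (|2 * t - 1| + s)) := by
  rw [loopSquareSweep, loopSquare_of_nonpos_right γ (by norm_num), ← neg_sub 1,
    ← max_zero_add_max_neg_zero_eq_abs_self]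
  norm_num [add_assoc]

@[simp] lemma loopSquareSweep_refl : loopSquareSweep (Path.refl (pt r hr)) u t s = x₀ := rfl

end Loops

section Retraction

variable {X Y : Type*} [TopologicalSpace X] [TopologicalSpace Y] {f : C(X, Y)} {r : C(Y, X)}
  {x₀ : X} {y₀ : Y}

def toLoop (hf : f x₀ = y₀) (hr : r y₀ = x₀) (hrf : ∀ x, r (f x) = x) :
    C(HoFib f y₀, Path (pt r hr) (pt r hr)) :=
  ContinuousMap.curryPath
    (lift
      ⟨fun p : HoFib f y₀ × I => if 2 * (p.2 : ℝ) ≤ 1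
          then f (r (p.1.path (clamp (1 - 2 * p.2)))) else p.1.path (clamp (2 * p.2 - 1)), by
        refine Continuous.if_le (by fun_prop) (by fun_prop) (by fun_prop) (by fun_prop)
          fun p hp => ?_
        rw [path_clamp_of_nonpos _ (by linarith), path_clamp_of_nonpos _ (by linarith), hrf]⟩
      ⟨fun p : (HoFib f y₀ × I) × I => r (p.1.1.path (clamp (|2 * (p.1.2 : ℝ) - 1| + p.2))),
        by fun_prop⟩
      (fun ⟨w, t⟩ => by
        dsimp only [ContinuousMap.coe_mk]
        split_ifs with ht
        · rw [hrf, Set.Icc.coe_zero, add_zero, abs_of_nonpos (by linarith), neg_sub]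
        · rw [Set.Icc.coe_zero, add_zero, abs_of_nonneg (by linarith)])
      (fun ⟨w, t⟩ => by
        simp [path_clamp_of_one_le _ (le_add_of_nonneg_left (abs_nonneg _)), hr]))
    (fun w => HoFib.ext (by simp [hr, hf]) fun s => by
      simp [path_clamp_of_one_le _ (le_add_of_nonneg_right s.2.1), hr])
    (fun w => HoFib.ext (by norm_num) fun s => by
      norm_num [path_clamp_of_one_le _ (le_add_of_nonneg_right s.2.1), hr])

def ofLoop (hf : f x₀ = y₀) (hr : r y₀ = x₀) : C(Path (pt r hr) (pt r hr), HoFib f y₀) :=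
  lift (.const _ x₀) ⟨fun p : Path (pt r hr) (pt r hr) × I => (p.1 p.2).point, by fun_prop⟩
    (fun γ => by simp [hf]) (fun γ => by simp)

@[simp] lemma toLoop_apply_point (hf : f x₀ = y₀) (hr : r y₀ = x₀) (hrf : ∀ x, r (f x) = x)
    (w : HoFib f y₀) (t : I) :
    (toLoop hf hr hrf w t).point = if 2 * (t : ℝ) ≤ 1
      then f (r (w.path (clamp (1 - 2 * t)))) else w.path (clamp (2 * t - 1)) := rfl

@[simp] lemma toLoop_apply_path (hf : f x₀ = y₀) (hr : r y₀ = x₀) (hrf : ∀ x, r (f x) = x)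
    (w : HoFib f y₀) (t s : I) :
    (toLoop hf hr hrf w t).path s = r (w.path (clamp (|2 * (t : ℝ) - 1| + s))) := rfl

@[simp] lemma ofLoop_point (hf : f x₀ = y₀) (hr : r y₀ = x₀) (γ : Path (pt r hr) (pt r hr)) :
    (ofLoop hf hr γ).point = x₀ := rfl

@[simp] lemma ofLoop_path (hf : f x₀ = y₀) (hr : r y₀ = x₀) (γ : Path (pt r hr) (pt r hr))
    (t : I) : (ofLoop hf hr γ).path t = (γ t).point := rfl

lemma toLoop_pt (hf : f x₀ = y₀) (hr : r y₀ = x₀) (hrf : ∀ x, r (f x) = x) :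
    toLoop hf hr hrf (pt f hf) = Path.refl (pt r hr) := by
  ext t s
  · simp [hr, hf]
  · simp [hr]

def slideHomotopy (hrf : ∀ x, r (f x) = x) : C(I × HoFib f y₀, HoFib f y₀) :=
  lift ⟨fun p : I × HoFib f y₀ => r (p.2.path p.1), by fun_prop⟩
    ⟨fun p : (I × HoFib f y₀) × I => if 2 * (p.2 : ℝ) ≤ p.1.1
        then f (r (p.1.2.path (clamp (p.1.1 - 2 * p.2))))
        else p.1.2.path (clamp ((2 * p.2 - p.1.1) / (2 - p.1.1))), by
      refine Continuous.if_le (by fun_prop) ?_ (by fun_prop) (by fun_prop) fun p hp => ?_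
      · fun_prop (disch := exact fun p => by linarith [p.1.1.2.2])
      · rw [path_clamp_of_nonpos _ (by linarith),
          path_clamp_of_nonpos _ (by rw [hp, sub_self, zero_div]), hrf]⟩
    (fun p => by simp [p.1.2.1])
    (fun p => by
      have hu : (p.1 : ℝ) ≤ 1 := p.1.2.2
      simp [show ¬ (2 : ℝ) ≤ p.1 by linarith, div_self (by linarith : (2 : ℝ) - p.1 ≠ 0)])

lemma slideHomotopy_zero (hrf : ∀ x, r (f x) = x) (w : HoFib f y₀) :
    slideHomotopy hrf (0, w) = w := by
  ext s
  · simp [slideHomotopy, hrf]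
  · simp only [slideHomotopy, lift_path, ContinuousMap.coe_mk, Set.Icc.coe_zero]
    split_ifs with hs
    · obtain rfl : s = 0 := Subtype.ext (by rw [Set.Icc.coe_zero]; linarith [s.2.1])
      simp [hrf]
    · simp

lemma slideHomotopy_one (hf : f x₀ = y₀) (hr : r y₀ = x₀) (hrf : ∀ x, r (f x) = x)
    (w : HoFib f y₀) : slideHomotopy hrf (1, w) = ofLoop hf hr (toLoop hf hr hrf w) := by
  ext s
  · simp [slideHomotopy, hr]
  · norm_num [slideHomotopy]

lemma slideHomotopy_pt (hf : f x₀ = y₀) (hrf : ∀ x, r (f x) = x) (u : I) :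
    slideHomotopy hrf (u, pt f hf) = pt f hf := by
  have hr : r y₀ = x₀ := by rw [← hf, hrf]
  ext s
  · simp [slideHomotopy, hr]
  · simp [slideHomotopy, hr, hf]

lemma ofLoop_comp_toLoop_homotopicRel_id (hf : f x₀ = y₀) (hr : r y₀ = x₀)
    (hrf : ∀ x, r (f x) = x) :
    ((ofLoop hf hr).comp (toLoop hf hr hrf)).HomotopicRel (.id _) {pt f hf} :=
  (ContinuousMap.homotopicRel_singleton (slideHomotopy hrf) (slideHomotopy_zero hrf)
    (slideHomotopy_one hf hr hrf) (slideHomotopy_pt hf hrf)).symm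

def sweepHomotopy (hf : f x₀ = y₀) (hr : r y₀ = x₀) (hrf : ∀ x, r (f x) = x) :
    C(I × Path (pt r hr) (pt r hr), Path (pt r hr) (pt r hr)) :=
  ContinuousMap.curryPath
    (lift
      ⟨fun p : (I × Path (pt r hr) (pt r hr)) × I => if 2 * (p.2 : ℝ) ≤ 1
          then f (loopSquareSweep p.1.2 p.1.1 p.2 0) else loopPoint p.1.2 (2 * p.2 - 1), by
        refine Continuous.if_le (by fun_prop) (by fun_prop) (by fun_prop) (by fun_prop)
          fun p hp => ?_
        rw [loopSquareSweep_zero _ hp.ge, loopPoint_of_nonpos _ (by linarith), hr, hf]⟩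
      ⟨fun q : ((I × Path (pt r hr) (pt r hr)) × I) × I =>
        loopSquareSweep q.1.1.2 q.1.1.1 q.1.2 q.2, by fun_prop⟩
      (fun q => by
        simp only [ContinuousMap.coe_mk, Set.Icc.coe_zero]
        split_ifs with ht
        · rw [hrf]
        · rw [loopSquareSweep_zero _ (by linarith)])
      (fun q => loopSquareSweep_of_one_le _ le_rfl))
    (fun p => HoFib.ext (by simp [loopSquareSweep_left, hf])
      fun s => loopSquareSweep_left _ s.2.1)
    (fun p => HoFib.ext (by norm_num [loopPoint_of_one_le])
      fun s => loopSquareSweep_right _ s.2.1 p.1.2.1)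

lemma sweepHomotopy_zero (hf : f x₀ = y₀) (hr : r y₀ = x₀) (hrf : ∀ x, r (f x) = x)
    (γ : Path (pt r hr) (pt r hr)) :
    sweepHomotopy hf hr hrf (0, γ) =
      Path.reparamCM stretchSecondHalf stretchSecondHalf_zero stretchSecondHalf_one γ := by
  ext t s
  · simp only [sweepHomotopy, ContinuousMap.curryPath_apply, lift_point, ContinuousMap.coe_mk,
      Set.Icc.coe_zero, Path.reparamCM, stretchSecondHalf_apply, point_apply_clamp]
    split_ifs with ht
    · rw [loopSquareSweep_at_zero, loopSquare_of_nonpos _ (by linarith), hf,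
        loopPoint_of_nonpos _ (by linarith)]
    · rfl
  · simp [sweepHomotopy, Path.reparamCM, loopSquareSweep_at_zero]

lemma sweepHomotopy_one (hf : f x₀ = y₀) (hr : r y₀ = x₀) (hrf : ∀ x, r (f x) = x)
    (γ : Path (pt r hr) (pt r hr)) :
    sweepHomotopy hf hr hrf (1, γ) = toLoop hf hr hrf (ofLoop hf hr γ) := by
  ext t s
  · simp only [sweepHomotopy, ContinuousMap.curryPath_apply, lift_point, ContinuousMap.coe_mk,
      Set.Icc.coe_one, toLoop_apply_point, ofLoop_path, point_apply_clamp]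
    split_ifs with ht
    · rw [loopSquareSweep_at_one, add_zero, abs_of_nonpos (by linarith), neg_sub]
    · rfl
  · exact loopSquareSweep_at_one γ

lemma sweepHomotopy_refl (hf : f x₀ = y₀) (hr : r y₀ = x₀) (hrf : ∀ x, r (f x) = x) (u : I) :
    sweepHomotopy hf hr hrf (u, Path.refl (pt r hr)) = Path.refl (pt r hr) := by
  ext t s
  · simp [sweepHomotopy, hf]
  · simp [sweepHomotopy]

lemma toLoop_comp_ofLoop_homotopicRel_id (hf : f x₀ = y₀) (hr : r y₀ = x₀)
    (hrf : ∀ x, r (f x) = x) :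
    ((toLoop hf hr hrf).comp (ofLoop hf hr)).HomotopicRel (.id _) {Path.refl (pt r hr)} :=
  (ContinuousMap.homotopicRel_singleton (sweepHomotopy hf hr hrf) (sweepHomotopy_zero hf hr hrf)
    (sweepHomotopy_one hf hr hrf) (sweepHomotopy_refl hf hr hrf)).symm.trans
    (Path.reparamCM_homotopicRel_id _ _ _)

lemma weaklyEquivalentTo_loop_of_retraction (hf : f x₀ = y₀) (hr : r y₀ = x₀)
    (hrf : ∀ x, r (f x) = x) :
    WeaklyEquivalentTo (HoFib f y₀) (pt f hf) (Path (pt r hr) (pt r hr)) (Path.refl (pt r hr)) :=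
  .of_homotopicRel (toLoop hf hr hrf) (ofLoop hf hr) (toLoop_pt hf hr hrf)
    (ofLoop_comp_toLoop_homotopicRel_id hf hr hrf) (toLoop_comp_ofLoop_homotopicRel_id hf hr hrf)

end Retraction

end HoFib

/-- the cosimplicial identities `s⁰ ∘ d⁰ = id = s⁰ ∘ d¹` force the
homotopy fibers of `d⁰` and `d¹` to both be weakly equivalent to `Ω hofib(s⁰)`,
and in particular to have isomorphic homotopy groups in each degree. -/
theorem statement3 {Z0 Z1 : Type*} [TopologicalSpace Z0] [TopologicalSpace Z1]
    (z0 : Z0) (z1 : Z1) (d0 d1 : C(Z0, Z1)) (s0 : C(Z1, Z0))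
    (hd0 : d0 z0 = z1) (hd1 : d1 z0 = z1) (hs0 : s0 z1 = z0)
    (h0 : ∀ x : Z0, s0 (d0 x) = x) (h1 : ∀ x : Z0, s0 (d1 x) = x) :
    WeaklyEquivalentTo (HoFib d0 z1) (HoFib.pt d0 hd0)
      (Path (HoFib.pt s0 hs0) (HoFib.pt s0 hs0)) (Path.refl (HoFib.pt s0 hs0)) ∧
    WeaklyEquivalentTo (HoFib d1 z1) (HoFib.pt d1 hd1)
      (Path (HoFib.pt s0 hs0) (HoFib.pt s0 hs0)) (Path.refl (HoFib.pt s0 hs0)) ∧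
    ∀ n : ℕ, Nonempty
      (HomotopyGroup.Pi n (HoFib d0 z1) (HoFib.pt d0 hd0) ≃
        HomotopyGroup.Pi n (HoFib d1 z1) (HoFib.pt d1 hd1)) := by
  have h₀ := HoFib.weaklyEquivalentTo_loop_of_retraction hd0 hs0 h0
  have h₁ := HoFib.weaklyEquivalentTo_loop_of_retraction hd1 hs0 h1
  exact ⟨h₀, h₁, h₀.nonempty_equiv h₁⟩

end
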